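/- arXiv:2312.16335 — 2 statements merged into one kernel-verified Lean document; each statement's English description precedes it below -/
import Mathlib

section
/- Suppose the queries q₁,…,q_m ∈ ℝ^D are normalized so that ‖q_j‖₂² = 1/m for all j (so that ‖Q‖_F² = 1, where Q stacks the queries as columns). Then the minimum over A, B ∈ St(D,d) of ‖Qᵀ Aᵀ B X − Qᵀ X‖_F² is at most the minimum over all (unconstrained) A, B ∈ ℝ^{d×D} of ‖Aᵀ B X − X‖_F². -/
open Matrix

def frobSq {m n : ℕ} (A : Matrix (Fin m) (Fin n) ℝ) : ℝ :=
  ∑ i, ∑ j, (A i j) ^ 2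

def Stiefel (D d : ℕ) : Set (Matrix (Fin d) (Fin D) ℝ) :=
  {U | U * Uᵀ = 1}

/-!
For any `A`, `B`, the columns of `Aᵀ B X` lie in the row space of `A`, of dimension at most `d`.
Enlarge it to a `d`-dimensional subspace `K` and let the rows of `U` be an orthonormal basis of
`K`: then `U ∈ St(D, d)` and `Uᵀ U` is the orthogonal projection onto `K`, so `Uᵀ U X` is at
least as close to `X` as `Aᵀ B X`, column by column. Taking `A = B = U` on the left, the factor
`Qᵀ` costs nothing, since `‖Qᵀ Z‖_F ≤ ‖Q‖_F ‖Z‖_F` and `‖Q‖_F² = m · (1 / m) ≤ 1`.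
If `d > D` the Stiefel manifold is empty and the left-hand side is `sInf ∅ = 0`.
-/

open Module WithLp

theorem Submodule.exists_le_finrank_eq {K V : Type*} [DivisionRing K] [AddCommGroup V]
    [Module K V] [FiniteDimensional K V] (S : Submodule K V) {n : ℕ}
    (hSn : finrank K S ≤ n) (hn : n ≤ finrank K V) :
    ∃ T : Submodule K V, S ≤ T ∧ finrank K T = n := by
  obtain ⟨C, hSC⟩ := S.exists_isCompl
  have hSC_dim := Submodule.finrank_add_eq_of_isCompl hSC
  obtain ⟨f, hf⟩ := exists_linearIndependent_of_le_finrank (R := K) (M := C)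
    (n := n - finrank K S) (by omega)
  set W := Submodule.span K (Set.range (C.subtype ∘ f))
  have hWC : W ≤ C := by
    rw [Submodule.span_le]
    rintro _ ⟨i, rfl⟩
    exact (f i).2
  have hW : finrank K W = n - finrank K S :=
    (finrank_span_eq_card (hf.map' C.subtype C.ker_subtype)).trans (Fintype.card_fin _)
  have hSW : S ⊓ W = ⊥ := eq_bot_iff.mpr fun x hx => by
    simpa using hSC.disjoint.le_bot ⟨hx.1, hWC hx.2⟩
  refine ⟨S ⊔ W, le_sup_left, ?_⟩
  have := Submodule.finrank_sup_add_finrank_inf_eq S W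
  rw [hSW, finrank_bot] at this
  omega

theorem Submodule.norm_starProjection_sub_le {E : Type*} [NormedAddCommGroup E]
    [InnerProductSpace ℝ E] {K : Submodule ℝ E} [K.HasOrthogonalProjection] (x : E) {y : E}
    (hy : y ∈ K) : ‖K.starProjection x - x‖ ≤ ‖y - x‖ := by
  rw [norm_sub_rev, norm_sub_rev y, K.starProjection_minimal]
  exact ciInf_le ⟨0, by rintro _ ⟨z, rfl⟩; exact norm_nonneg _⟩ (⟨y, hy⟩ : K)

theorem frobSq_nonneg {m n : ℕ} (A : Matrix (Fin m) (Fin n) ℝ) : 0 ≤ frobSq A := by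
  unfold frobSq
  positivity

theorem frobSq_eq_sum_norm_sq_col {m n : ℕ} (Z : Matrix (Fin m) (Fin n) ℝ) :
    frobSq Z = ∑ k, ‖toLp 2 (fun i => Z i k)‖ ^ 2 := by
  simp only [EuclideanSpace.norm_sq_eq, Real.norm_eq_abs, sq_abs]
  exact Finset.sum_comm

section Frobenius

attribute [local instance] Matrix.frobeniusNormedAddCommGroup

theorem frobSq_eq_frobenius_norm_sq {m n : ℕ} (A : Matrix (Fin m) (Fin n) ℝ) :
    frobSq A = ‖A‖ ^ 2 := by
  rw [frobenius_norm_def, ← Real.rpow_natCast, ← Real.rpow_mul (by positivity)]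
  simp [frobSq]

theorem frobSq_mul_le {l m n : ℕ} (A : Matrix (Fin l) (Fin m) ℝ) (B : Matrix (Fin m) (Fin n) ℝ) :
    frobSq (A * B) ≤ frobSq A * frobSq B := by
  simp only [frobSq_eq_frobenius_norm_sq, ← mul_pow]
  exact pow_le_pow_left₀ (norm_nonneg _) (frobenius_norm_mul A B) 2

end Frobenius

theorem frobSq_transpose_le_one {D m : ℕ} (Q : Matrix (Fin D) (Fin m) ℝ)
    (hQ : ∀ j, ∑ i, (Q i j) ^ 2 = 1 / (m : ℝ)) : frobSq Qᵀ ≤ 1 := by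
  simp only [frobSq, transpose_apply, hQ, Finset.sum_const, Finset.card_univ, Fintype.card_fin,
    nsmul_eq_mul]
  rcases Nat.eq_zero_or_pos m with rfl | hm
  · simp
  · rw [mul_one_div_cancel (by positivity)]

theorem frobSq_mul_sub_le_of_forall {D n : ℕ} {M N : Matrix (Fin D) (Fin D) ℝ}
    (h : ∀ v, ‖toLp 2 (M *ᵥ v - v)‖ ≤ ‖toLp 2 (N *ᵥ v - v)‖) (X : Matrix (Fin D) (Fin n) ℝ) :
    frobSq (M * X - X) ≤ frobSq (N * X - X) := by
  rw [frobSq_eq_sum_norm_sq_col, frobSq_eq_sum_norm_sq_col]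
  gcongr with k
  exact h fun i => X i k

theorem le_of_mem_stiefel {D d : ℕ} {U : Matrix (Fin d) (Fin D) ℝ} (hU : U ∈ Stiefel D d) :
    d ≤ D := by
  have h := rank_mul_le_left U Uᵀ
  rw [show U * Uᵀ = 1 from hU, rank_one, Fintype.card_fin] at h
  exact h.trans (rank_le_width U)

theorem exists_mem_stiefel_starProjection_eq {D d : ℕ}
    (K : Submodule ℝ (EuclideanSpace ℝ (Fin D))) (hK : finrank ℝ K = d) :
    ∃ U ∈ Stiefel D d, ∀ v, toLp 2 ((Uᵀ * U) *ᵥ v) = K.starProjection (toLp 2 v) := by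
  let b := (stdOrthonormalBasis ℝ K).reindex (finCongr hK)
  refine ⟨of fun i j => (b i : EuclideanSpace ℝ (Fin D)) j, ?_, fun v => ?_⟩
  · change _ * _ = 1
    ext i j
    simpa [mul_apply, one_apply, PiLp.inner_apply, eq_comm] using
      orthonormal_iff_ite.mp b.orthonormal j i
  · rw [b.starProjection_eq_sum_rankOne, ← mulVec_mulVec]
    ext k
    simp [mulVec, dotProduct, PiLp.inner_apply, mul_comm]

theorem exists_mem_stiefel_frobSq_le {D d n : ℕ} (hd : d ≤ D) (A B : Matrix (Fin d) (Fin D) ℝ)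
    (X : Matrix (Fin D) (Fin n) ℝ) :
    ∃ U ∈ Stiefel D d, frobSq (Uᵀ * U * X - X) ≤ frobSq (Aᵀ * B * X - X) := by
  set S := LinearMap.range (toEuclideanLin Aᵀ)
  have hS : finrank ℝ S ≤ d := (LinearMap.finrank_range_le _).trans (finrank_euclideanSpace_fin).le
  obtain ⟨K, hSK, hK⟩ := S.exists_le_finrank_eq hS (hd.trans finrank_euclideanSpace_fin.ge)
  obtain ⟨U, hU, hUK⟩ := exists_mem_stiefel_starProjection_eq K hK
  refine ⟨U, hU, frobSq_mul_sub_le_of_forall (fun v => ?_) X⟩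
  have hy : toLp 2 ((Aᵀ * B) *ᵥ v) ∈ K := by
    rw [← mulVec_mulVec]
    exact hSK ⟨toLp 2 (B *ᵥ v), rfl⟩
  rw [toLp_sub, toLp_sub, hUK]
  exact K.norm_starProjection_sub_le _ hy

theorem stmt_3 (D m n d : ℕ)
    (Q : Matrix (Fin D) (Fin m) ℝ) (X : Matrix (Fin D) (Fin n) ℝ)
    (hQ : ∀ j, ∑ i, (Q i j) ^ 2 = 1 / (m : ℝ)) :
    sInf {y : ℝ | ∃ A ∈ Stiefel D d, ∃ B ∈ Stiefel D d,
        y = frobSq (Qᵀ * Aᵀ * B * X - Qᵀ * X)} ≤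
    sInf {y : ℝ | ∃ A B : Matrix (Fin d) (Fin D) ℝ,
        y = frobSq (Aᵀ * B * X - X)} := by
  set L := {y : ℝ | ∃ A ∈ Stiefel D d, ∃ B ∈ Stiefel D d,
    y = frobSq (Qᵀ * Aᵀ * B * X - Qᵀ * X)}
  by_cases hd : d ≤ D
  · refine le_csInf ⟨_, 0, 0, rfl⟩ ?_
    rintro _ ⟨A, B, rfl⟩
    obtain ⟨U, hU, hUAB⟩ := exists_mem_stiefel_frobSq_le hd A B X
    have hL : BddBelow L := ⟨0, by rintro _ ⟨_, -, _, -, rfl⟩; exact frobSq_nonneg _⟩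
    calc sInf L ≤ frobSq (Qᵀ * Uᵀ * U * X - Qᵀ * X) := csInf_le hL ⟨U, hU, U, hU, rfl⟩
      _ = frobSq (Qᵀ * (Uᵀ * U * X - X)) := by simp only [Matrix.mul_sub, Matrix.mul_assoc]
      _ ≤ frobSq Qᵀ * frobSq (Uᵀ * U * X - X) := frobSq_mul_le _ _
      _ ≤ frobSq (Uᵀ * U * X - X) :=
        mul_le_of_le_one_left (frobSq_nonneg _) (frobSq_transpose_le_one Q hQ)
      _ ≤ frobSq (Aᵀ * B * X - X) := hUAB
  · have hL : L = ∅ :=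
      Set.eq_empty_of_forall_notMem fun _ ⟨_, hA, _⟩ => hd (le_of_mem_stiefel hA)
    rw [hL, Real.sInf_empty]
    exact Real.sInf_nonneg (by rintro _ ⟨_, _, rfl⟩; exact frobSq_nonneg _)
end

section
/- Let f : D → ℝ be continuously differentiable on a compact convex set D ⊆ ℝ^N, with curvature constant C_f = sup over z, s ∈ D, γ ∈ (0,1], y = z + γ(s − z), of (2/γ²)(f(y) − f(z) − ⟨∇f(z), y − z⟩). If ∇f is L-Lipschitz continuous on D, then C_f ≤ L · diam(D)², where diam(D) is the diameter of D in the Euclidean norm. -/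
/-!
Along the segment `t ↦ z + t • (y - z)` the directional derivative of `f` drifts from
`f' z (y - z)` by at most `L ‖y - z‖² t`, so comparing `f` with the parabola
`f z + t f' z (y - z) + L ‖y - z‖² t² / 2` gives `f y - f z - f' z (y - z) ≤ L ‖y - z‖² / 2`.
For `y = z + γ • (s - z)` we have `‖y - z‖ ≤ γ diam D`.
-/

open Set

theorem sub_sub_deriv_le_of_deriv_sub_le {g g' : ℝ → ℝ} {K : ℝ}
    (hg : ∀ t ∈ Icc (0 : ℝ) 1, HasDerivWithinAt g (g' t) (Icc 0 1) t)
    (hg' : ∀ t ∈ Icc (0 : ℝ) 1, g' t - g' 0 ≤ K * t) :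
    g 1 - g 0 - g' 0 ≤ K / 2 := by
  have hB (t : ℝ) :
      HasDerivAt (fun t ↦ g 0 + g' 0 * t + K / 2 * t ^ 2) (g' 0 + K * t) t := by
    refine ((((hasDerivAt_id' t).const_mul (g' 0)).const_add (g 0)).add
      ((hasDerivAt_pow 2 t).const_mul (K / 2))).congr_deriv ?_
    push_cast; ring
  have hle := image_le_of_deriv_right_le_deriv_boundary (a := 0) (b := 1)
    (fun t ht ↦ (hg t ht).continuousWithinAt)
    (fun t ht ↦ (hg t (Ico_subset_Icc_self ht)).mono_of_mem_nhdsWithin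
      (Icc_mem_nhdsGE_of_mem ht))
    (B := fun t ↦ g 0 + g' 0 * t + K / 2 * t ^ 2) (by simp)
    (fun t _ ↦ (hB t).continuousAt.continuousWithinAt)
    (fun t _ ↦ (hB t).hasDerivWithinAt)
    (fun t ht ↦ by linarith [hg' t (Ico_subset_Icc_self ht)])
    (right_mem_Icc.2 zero_le_one)
  simp only [one_pow, mul_one] at hle
  linarith

theorem Convex.image_sub_sub_fderiv_le_of_lipschitz {E : Type*} [NormedAddCommGroup E]
    [NormedSpace ℝ E] {D : Set E} (hD : Convex ℝ D) {f : E → ℝ} {f' : E → E →L[ℝ] ℝ}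
    (hf : ∀ x ∈ D, HasFDerivWithinAt f (f' x) D x) {L : ℝ} {z y : E} (hz : z ∈ D) (hy : y ∈ D)
    (hLip : ∀ x ∈ D, ‖f' x - f' z‖ ≤ L * ‖x - z‖) :
    f y - f z - f' z (y - z) ≤ L * ‖y - z‖ ^ 2 / 2 := by
  set p : ℝ → E := fun t ↦ z + t • (y - z)
  have hp : MapsTo p (Icc 0 1) D := fun t ht ↦ hD.add_smul_sub_mem hz hy ht
  have hp' (t : ℝ) : HasDerivAt p (y - z) t := by
    simpa [p] using ((hasDerivAt_id t).smul_const (y - z)).const_add z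
  have hdrift (t : ℝ) (ht : t ∈ Icc (0 : ℝ) 1) :
      f' (p t) (y - z) - f' z (y - z) ≤ L * ‖y - z‖ ^ 2 * t :=
    calc f' (p t) (y - z) - f' z (y - z) = (f' (p t) - f' z) (y - z) := rfl
      _ ≤ ‖f' (p t) - f' z‖ * ‖y - z‖ := (le_abs_self _).trans ((f' (p t) - f' z).le_opNorm _)
      _ ≤ L * ‖p t - z‖ * ‖y - z‖ := by gcongr; exact hLip _ (hp ht)
      _ = L * ‖y - z‖ ^ 2 * t := by
        simp only [p, add_sub_cancel_left, norm_smul, Real.norm_of_nonneg ht.1]; ring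
  have hle := sub_sub_deriv_le_of_deriv_sub_le (g := f ∘ p) (g' := fun t ↦ f' (p t) (y - z))
    (fun t ht ↦ (hf _ (hp ht)).comp_hasDerivWithinAt t (hp' t).hasDerivWithinAt hp)
    (by simpa [p] using hdrift)
  simpa [p] using hle

theorem stmt_12_general (N : ℕ) (Dset : Set (EuclideanSpace ℝ (Fin N)))
    (hDc : IsCompact Dset) (hDconv : Convex ℝ Dset)
    (f : EuclideanSpace ℝ (Fin N) → ℝ)
    (f' : EuclideanSpace ℝ (Fin N) → (EuclideanSpace ℝ (Fin N) →L[ℝ] ℝ))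
    (hdiff : ∀ z ∈ Dset, HasFDerivWithinAt f (f' z) Dset z)
    (L : ℝ) (hL : 0 ≤ L)
    (hLip : ∀ z ∈ Dset, ∀ y ∈ Dset, ‖f' z - f' y‖ ≤ L * ‖z - y‖) :
    ∀ z ∈ Dset, ∀ s ∈ Dset, ∀ γ ∈ Set.Ioc (0 : ℝ) 1,
      (2 / γ ^ 2) * (f (z + γ • (s - z)) - f z - f' z (γ • (s - z))) ≤
        L * (Metric.diam Dset) ^ 2 := by
  rintro z hz s hs γ ⟨hγ0, hγ1⟩
  have hy : z + γ • (s - z) ∈ Dset := hDconv.add_smul_sub_mem hz hs ⟨hγ0.le, hγ1⟩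
  have hstep : ‖γ • (s - z)‖ ≤ γ * Metric.diam Dset := by
    rw [norm_smul, Real.norm_of_nonneg hγ0.le, ← dist_eq_norm]
    gcongr
    exact Metric.dist_le_diam_of_mem hDc.isBounded hs hz
  have hdescent := hDconv.image_sub_sub_fderiv_le_of_lipschitz hdiff hz hy
    (fun x hx ↦ hLip x hx z hz)
  rw [add_sub_cancel_left] at hdescent
  rw [div_mul_eq_mul_div, div_le_iff₀ (by positivity)]
  calc 2 * (f (z + γ • (s - z)) - f z - f' z (γ • (s - z)))
      ≤ 2 * (L * ‖γ • (s - z)‖ ^ 2 / 2) := by linarith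
    _ ≤ 2 * (L * (γ * Metric.diam Dset) ^ 2 / 2) := by gcongr
    _ = L * Metric.diam Dset ^ 2 * γ ^ 2 := by ring

theorem stmt_12 (N : ℕ) (Dset : Set (EuclideanSpace ℝ (Fin N)))
    (hDc : IsCompact Dset) (hDconv : Convex ℝ Dset)
    (f : EuclideanSpace ℝ (Fin N) → ℝ)
    (f' : EuclideanSpace ℝ (Fin N) → (EuclideanSpace ℝ (Fin N) →L[ℝ] ℝ))
    (hdiff : ∀ z ∈ Dset, HasFDerivWithinAt f (f' z) Dset z)
    (hcont : ContinuousOn f' Dset)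
    (L : ℝ) (hL : 0 ≤ L)
    (hLip : ∀ z ∈ Dset, ∀ y ∈ Dset, ‖f' z - f' y‖ ≤ L * ‖z - y‖) :
    ∀ z ∈ Dset, ∀ s ∈ Dset, ∀ γ ∈ Set.Ioc (0 : ℝ) 1,
      (2 / γ ^ 2) * (f (z + γ • (s - z)) - f z - f' z (γ • (s - z))) ≤
        L * (Metric.diam Dset) ^ 2 :=
  stmt_12_general N Dset hDc hDconv f f' hdiff L hL hLip
end
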